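/- (Smoothing property of the quadrilinear operator B_4) Let s ≥ 0 and ε ∈ (0, 1/2). Then for every t ∈ ℝ the operator B_4 := B_4^1 + B_4^2 maps (Ḣ^s)⁴ into Ḣ^{s+ε} and satisfies ‖B_4(φ,ψ,ξ,η)‖_{Ḣ^{s+ε}} ≤ C(s,ε) ‖φ‖_{Ḣ^s} ‖ψ‖_{Ḣ^s} ‖ξ‖_{Ḣ^s} ‖η‖_{Ḣ^s}, with a constant C(s,ε) independent of t. -/

import Mathlib

open MeasureTheory Set

noncomputable section

/-- The weight `|k|^(2s)` appearing in the `Ḣ^s` norm. -/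
def wt (s : ℝ) (k : ℤ) : ℝ := ((|k| : ℤ) : ℝ) ^ (2 * s)

/-- Membership in the homogeneous Sobolev space `Ḣ^s` of sequences indexed by
nonzero integers. -/
def memH (s : ℝ) (u : ℤ → ℂ) : Prop :=
  Summable (fun k : {k : ℤ // k ≠ 0} => wt s k.1 * ‖u k.1‖ ^ 2)

/-- The `Ḣ^s` norm. -/
def hnorm (s : ℝ) (u : ℤ → ℂ) : ℝ :=
  Real.sqrt (∑' k : {k : ℤ // k ≠ 0}, wt s k.1 * ‖u k.1‖ ^ 2)

/-- The `(Ḣ^s)²` norm of a pair. -/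
def hnorm2 (s : ℝ) (u v : ℤ → ℂ) : ℝ :=
  Real.sqrt (hnorm s u ^ 2 + hnorm s v ^ 2)

/-- The conserved energy functional `𝓔(u,v) = 2‖u‖² + 2‖v‖² + ‖u-v‖²` (in `Ḣ^0`). -/
def energyE (u v : ℤ → ℂ) : ℝ :=
  2 * hnorm 0 u ^ 2 + 2 * hnorm 0 v ^ 2 + hnorm 0 (fun k => u k - v k) ^ 2

/-- Projection `𝒫` onto the low Fourier modes `|k| ≤ N`. -/
def Plow (N : ℕ) (u : ℤ → ℂ) : ℤ → ℂ := fun k => if |k| ≤ (N : ℤ) then u k else 0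

/-- Projection `𝒬 = I - 𝒫` onto the high Fourier modes `|k| > N`. -/
def Qhigh (N : ℕ) (u : ℤ → ℂ) : ℤ → ℂ := fun k => if |k| ≤ (N : ℤ) then 0 else u k

/-- The oscillating factor `e^{3 i k k₁ k₂ t}` with `k₂ = k - k₁`. -/
def osc2 (t : ℝ) (k k1 : ℤ) : ℂ :=
  Complex.exp (3 * Complex.I * (k : ℂ) * (k1 : ℂ) * ((k - k1 : ℤ) : ℂ) * (t : ℂ))

/-- The oscillating factor `e^{3 i (k₁+k₂)(k₂+k₃)(k₁+k₃) t}`. -/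
def osc3 (t : ℝ) (k1 k2 k3 : ℤ) : ℂ :=
  Complex.exp (3 * Complex.I * ((k1 + k2 : ℤ) : ℂ) * ((k2 + k3 : ℤ) : ℂ) *
    ((k1 + k3 : ℤ) : ℂ) * (t : ℂ))

/-- The bilinear operator `B₁` at time `t`. -/
def B1 (t : ℝ) (φ ψ : ℤ → ℂ) : ℤ → ℂ := fun k =>
  Complex.I * (k : ℂ) / 2 *
    ∑' k1 : ℤ, if k1 ≠ 0 ∧ k - k1 ≠ 0 then osc2 t k k1 * φ k1 * ψ (k - k1) else 0

/-- The bilinear operator `B₂` at time `t`. -/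
def B2 (t : ℝ) (φ ψ : ℤ → ℂ) : ℤ → ℂ := fun k =>
  (1 / 6 : ℂ) *
    ∑' k1 : ℤ, if k1 ≠ 0 ∧ k - k1 ≠ 0 then
      osc2 t k k1 * φ k1 * ψ (k - k1) / ((k1 : ℂ) * ((k - k1 : ℤ) : ℂ)) else 0

/-- The trilinear operator `R₃` at time `t`. -/
def R3 (t : ℝ) (φ ψ ξ : ℤ → ℂ) : ℤ → ℂ := fun k =>
  ∑' p : ℤ × ℤ,
    if p.1 ≠ 0 ∧ p.2 ≠ 0 ∧ k - p.1 - p.2 ≠ 0 then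
      osc3 t p.1 p.2 (k - p.1 - p.2) * φ p.1 * ψ p.2 * ξ (k - p.1 - p.2) / (p.1 : ℂ)
    else 0

/-- The resonant part `R₃res` (sum over `(k₁+k₂)(k₂+k₃)(k₁+k₃) = 0`). -/
def R3res (φ ψ ξ : ℤ → ℂ) : ℤ → ℂ := fun k =>
  ∑' p : ℤ × ℤ,
    if p.1 ≠ 0 ∧ p.2 ≠ 0 ∧ k - p.1 - p.2 ≠ 0 ∧
        (p.1 + p.2) * (p.2 + (k - p.1 - p.2)) * (p.1 + (k - p.1 - p.2)) = 0 then
      φ p.1 * ψ p.2 * ξ (k - p.1 - p.2) / (p.1 : ℂ)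
    else 0

/-- The nonresonant part `R₃nres` (sum over `(k₁+k₂)(k₂+k₃)(k₁+k₃) ≠ 0`). -/
def R3nres (t : ℝ) (φ ψ ξ : ℤ → ℂ) : ℤ → ℂ := fun k =>
  ∑' p : ℤ × ℤ,
    if p.1 ≠ 0 ∧ p.2 ≠ 0 ∧ k - p.1 - p.2 ≠ 0 ∧
        (p.1 + p.2) * (p.2 + (k - p.1 - p.2)) * (p.1 + (k - p.1 - p.2)) ≠ 0 then
      osc3 t p.1 p.2 (k - p.1 - p.2) * φ p.1 * ψ p.2 * ξ (k - p.1 - p.2) / (p.1 : ℂ)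
    else 0

/-- The operator `R₃nres1(φ,ψ,ξ) = R₃nres(φ,𝒫ψ,ξ) + R₃nres(φ,𝒬ψ,𝒫ξ)`. -/
def R3nres1 (N : ℕ) (t : ℝ) (φ ψ ξ : ℤ → ℂ) : ℤ → ℂ := fun k =>
  R3nres t φ (Plow N ψ) ξ k + R3nres t φ (Qhigh N ψ) (Plow N ξ) k

/-- The trilinear operator `B₃` (nonresonant indices). -/
def B3 (t : ℝ) (φ ψ ξ : ℤ → ℂ) : ℤ → ℂ := fun k =>
  ∑' p : ℤ × ℤ,
    if p.1 ≠ 0 ∧ p.2 ≠ 0 ∧ k - p.1 - p.2 ≠ 0 ∧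
        (p.1 + p.2) * (p.2 + (k - p.1 - p.2)) * (p.1 + (k - p.1 - p.2)) ≠ 0 then
      osc3 t p.1 p.2 (k - p.1 - p.2) * φ p.1 * ψ p.2 * ξ (k - p.1 - p.2) /
        ((p.1 : ℂ) * ((p.1 + p.2 : ℤ) : ℂ) * ((p.2 + (k - p.1 - p.2) : ℤ) : ℂ) *
          ((p.1 + (k - p.1 - p.2) : ℤ) : ℂ))
    else 0

/-- The operator `B₃₀(φ,ψ,ξ) = B₃(φ,𝒬ψ,𝒬ξ)`. -/
def B30 (N : ℕ) (t : ℝ) (φ ψ ξ : ℤ → ℂ) : ℤ → ℂ :=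
  B3 t φ (Qhigh N ψ) (Qhigh N ξ)

/-- The phase `Φ(k₁,k₂,k₃,k₄) = (k₁+k₂+k₃+k₄)³ - k₁³ - k₂³ - k₃³ - k₄³`. -/
def Phi4 (k1 k2 k3 k4 : ℤ) : ℤ :=
  (k1 + k2 + k3 + k4) ^ 3 - k1 ^ 3 - k2 ^ 3 - k3 ^ 3 - k4 ^ 3

/-- The oscillating factor `e^{i Φ(k₁,k₂,k₃,k₄) t}`. -/
def osc4 (t : ℝ) (k1 k2 k3 k4 : ℤ) : ℂ :=
  Complex.exp (Complex.I * ((Phi4 k1 k2 k3 k4 : ℤ) : ℂ) * (t : ℂ))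

/-- The quadrilinear operator `B₄¹`. -/
def B41 (t : ℝ) (φ ψ ξ η : ℤ → ℂ) : ℤ → ℂ := fun k =>
  ∑' q : ℤ × ℤ × ℤ,
    let k1 := q.1; let k2 := q.2.1; let k3 := q.2.2; let k4 := k - k1 - k2 - k3
    if k1 ≠ 0 ∧ k2 ≠ 0 ∧ k3 ≠ 0 ∧ k4 ≠ 0 ∧
        (k1 + k2) * (k1 + k3 + k4) * (k2 + k3 + k4) ≠ 0 then
      osc4 t k1 k2 k3 k4 * φ k1 * ψ k2 * ξ k3 * η k4 /
        (((k1 + k2 : ℤ) : ℂ) * ((k1 + k3 + k4 : ℤ) : ℂ) * ((k2 + k3 + k4 : ℤ) : ℂ))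
    else 0

/-- The quadrilinear operator `B₄²`. -/
def B42 (t : ℝ) (φ ψ ξ η : ℤ → ℂ) : ℤ → ℂ := fun k =>
  ∑' q : ℤ × ℤ × ℤ,
    let k1 := q.1; let k2 := q.2.1; let k3 := q.2.2; let k4 := k - k1 - k2 - k3
    if k1 ≠ 0 ∧ k2 ≠ 0 ∧ k3 ≠ 0 ∧ k4 ≠ 0 ∧
        (k1 + k2) * (k1 + k3 + k4) * (k2 + k3 + k4) ≠ 0 then
      osc4 t k1 k2 k3 k4 * ((k3 + k4 : ℤ) : ℂ) * φ k1 * ψ k2 * ξ k3 * η k4 /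
        ((k1 : ℂ) * ((k1 + k2 : ℤ) : ℂ) * ((k1 + k3 + k4 : ℤ) : ℂ) *
          ((k2 + k3 + k4 : ℤ) : ℂ))
    else 0

/-- The quadrilinear operator `B₄ = B₄¹ + B₄²`. -/
def B4 (t : ℝ) (φ ψ ξ η : ℤ → ℂ) : ℤ → ℂ := fun k =>
  B41 t φ ψ ξ η k + B42 t φ ψ ξ η k

/-- Right-hand side (before the `ik/2` factor and integration) of the `u`-equation
of the transformed Majda–Biello system. -/
def mbRHSu (u v : ℝ → ℤ → ℂ) (τ : ℝ) (k : ℤ) : ℂ :=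
  ∑' k1 : ℤ, if k1 ≠ 0 ∧ k - k1 ≠ 0 then
    osc2 τ k k1 * (u τ k1 * v τ (k - k1) - u τ k1 * u τ (k - k1)) else 0

/-- Right-hand side (before the `ik/2` factor and integration) of the `v`-equation
of the transformed Majda–Biello system. -/
def mbRHSv (u v : ℝ → ℤ → ℂ) (τ : ℝ) (k : ℤ) : ℂ :=
  ∑' k1 : ℤ, if k1 ≠ 0 ∧ k - k1 ≠ 0 then
    osc2 τ k k1 * (u τ k1 * v τ (k - k1) - v τ k1 * v τ (k - k1)) else 0

/-- `(u,v)` is a solution of the transformed Majda–Biello system on `[0,T]`: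
it belongs to `L^∞([0,T];(Ḣ^0)²)` and satisfies the integrated equations. -/
def IsMBSolution (T : ℝ) (u v : ℝ → ℤ → ℂ) : Prop :=
  (∃ M : ℝ, ∀ t ∈ Icc (0 : ℝ) T,
      memH 0 (u t) ∧ memH 0 (v t) ∧ hnorm2 0 (u t) (v t) ≤ M) ∧
  ∀ k : ℤ, k ≠ 0 → ∀ t ∈ Icc (0 : ℝ) T,
    (u t k - u 0 k = Complex.I * (k : ℂ) / 2 * (∫ τ in (0 : ℝ)..t, mbRHSu u v τ k)) ∧
    (v t k - v 0 k = Complex.I * (k : ℂ) / 2 * (∫ τ in (0 : ℝ)..t, mbRHSv u v τ k))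

/-- The (finite) right-hand side of the `u`-equation of the `N`-th Galerkin system. -/
def galRHSu (N : ℕ) (t : ℝ) (f g : ℤ → ℂ) (k : ℤ) : ℂ :=
  Complex.I * (k : ℂ) / 2 * ∑ k1 ∈ Finset.Icc (-(N : ℤ)) (N : ℤ),
    (if k1 ≠ 0 ∧ k - k1 ≠ 0 ∧ |k - k1| ≤ (N : ℤ) then
      osc2 t k k1 * (f k1 * g (k - k1) - f k1 * f (k - k1)) else 0)

/-- The (finite) right-hand side of the `v`-equation of the `N`-th Galerkin system. -/
def galRHSv (N : ℕ) (t : ℝ) (f g : ℤ → ℂ) (k : ℤ) : ℂ :=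
  Complex.I * (k : ℂ) / 2 * ∑ k1 ∈ Finset.Icc (-(N : ℤ)) (N : ℤ),
    (if k1 ≠ 0 ∧ k - k1 ≠ 0 ∧ |k - k1| ≤ (N : ℤ) then
      osc2 t k k1 * (f k1 * g (k - k1) - g k1 * g (k - k1)) else 0)

/-- `(u,v)` solves the `N`-th Galerkin system on the set `S` with initial data
`(uin, vin)`. -/
def IsGalerkinSolution (N : ℕ) (uin vin : ℤ → ℂ) (S : Set ℝ) (u v : ℝ → ℤ → ℂ) : Prop :=
  (∀ k : ℤ, k ≠ 0 → u 0 k = uin k ∧ v 0 k = vin k) ∧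
  ∀ t ∈ S, ∀ k : ℤ, k ≠ 0 →
    HasDerivWithinAt (fun τ : ℝ => u τ k)
      (if |k| ≤ (N : ℤ) then galRHSu N t (u t) (v t) k else 0) S t ∧
    HasDerivWithinAt (fun τ : ℝ => v τ k)
      (if |k| ≤ (N : ℤ) then galRHSv N t (u t) (v t) k else 0) S t

/-!
Since all four frequencies are nonzero, `|k| ≤ 4 |k₁ k₂ k₃ k₄|`, so the weight `|k|^s` is absorbed
by the `Ḣ^s` weights of the four inputs, and the phase plays no role because `|e^{iΦt}| = 1`.
Writing `α = k₁ + k₂`, `β = k - k₂`, `γ = k - k₁`, the kernel of `B₄¹` is `1 / (αβγ)`, and in `B₄²`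
the numerator `k₃ + k₄ = γ - α + k₁` is absorbed by one of the factors `γ, α, k₁` of the
denominator. Cauchy–Schwarz in the convolution variable `k₃` and then in `(k₁, k₂)` bounds
`|k|^s |B₄(φ,ψ,ξ,η)_k|` by the product of the four `Ḣ^s` norms times the `ℓ²(ℤ²)` norm of the
multiplier, and iterating the convolution inequality `∑ₙ ⟨a+n⟩⁻² ⟨b-n⟩⁻² ≲ ⟨a+b⟩⁻²` shows that
this norm is `≲ ⟨k⟩⁻¹`. Hence `|k|^{2(s+ε)} |B₄(φ,ψ,ξ,η)_k|² ≲ |k|^{2ε-2}`, which is summable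
since `ε < 1/2`.
-/

open scoped ENNReal

def l2norm {ι : Type*} (f : ι → ℝ≥0∞) : ℝ≥0∞ := (∑' i, f i ^ 2) ^ (1 / 2 : ℝ)

lemma l2norm_sq {ι : Type*} (f : ι → ℝ≥0∞) : l2norm f ^ 2 = ∑' i, f i ^ 2 := by
  rw [l2norm, ← ENNReal.rpow_natCast, ← ENNReal.rpow_mul]
  norm_num

lemma tsum_mul_le_l2norm_mul {ι : Type*} (f g : ι → ℝ≥0∞) :
    ∑' i, f i * g i ≤ l2norm f * l2norm g := by
  let _ : MeasurableSpace ι := ⊤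
  have h := ENNReal.lintegral_mul_le_Lp_mul_Lq Measure.count Real.HolderConjugate.two_two
    measurable_from_top.aemeasurable measurable_from_top.aemeasurable (f := f) (g := g)
  simpa [l2norm, lintegral_count', measurable_from_top] using h

lemma tsum_mul_sub_le_l2norm_mul (c d : ℤ → ℝ≥0∞) (m : ℤ) :
    ∑' n, c n * d (m - n) ≤ l2norm c * l2norm d := by
  have h : l2norm (fun n => d (m - n)) = l2norm d := by
    rw [l2norm, l2norm, ← (Equiv.subLeft m).tsum_eq (fun n => d n ^ 2)]
    rfl
  simpa [h] using tsum_mul_le_l2norm_mul c (fun n => d (m - n))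

lemma l2norm_mul_prod {α β : Type*} (a : α → ℝ≥0∞) (b : β → ℝ≥0∞) :
    l2norm (fun p : α × β => a p.1 * b p.2) = l2norm a * l2norm b := by
  simp only [l2norm, mul_pow, ENNReal.tsum_prod', ENNReal.tsum_mul_left, ENNReal.tsum_mul_right]
  exact ENNReal.mul_rpow_of_nonneg _ _ (by norm_num)

lemma tsum_quadrilinear_le (a b c d : ℤ → ℝ≥0∞) (μ : ℤ × ℤ → ℝ≥0∞) (k : ℤ) :
    ∑' q : ℤ × ℤ × ℤ, a q.1 * b q.2.1 * μ (q.1, q.2.1) * c q.2.2 * d (k - q.1 - q.2.1 - q.2.2) ≤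
      l2norm a * l2norm b * l2norm μ * l2norm c * l2norm d := by
  calc ∑' q : ℤ × ℤ × ℤ, a q.1 * b q.2.1 * μ (q.1, q.2.1) * c q.2.2 *
        d (k - q.1 - q.2.1 - q.2.2)
      = ∑' p : ℤ × ℤ, a p.1 * b p.2 * μ p * ∑' z, c z * d (k - p.1 - p.2 - z) := by
        rw [ENNReal.tsum_prod', ENNReal.tsum_prod']
        simp_rw [ENNReal.tsum_prod', ← ENNReal.tsum_mul_left, mul_assoc]
    _ ≤ ∑' p : ℤ × ℤ, a p.1 * b p.2 * μ p * (l2norm c * l2norm d) := by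
        gcongr with p
        exact tsum_mul_sub_le_l2norm_mul c d _
    _ = (∑' p : ℤ × ℤ, (a p.1 * b p.2) * μ p) * (l2norm c * l2norm d) :=
        ENNReal.tsum_mul_right
    _ ≤ l2norm a * l2norm b * l2norm μ * (l2norm c * l2norm d) := by
        gcongr
        simpa only [l2norm_mul_prod] using tsum_mul_le_l2norm_mul (fun p : ℤ × ℤ => a p.1 * b p.2) μ
    _ = l2norm a * l2norm b * l2norm μ * l2norm c * l2norm d := by ring

/-- `⟨n⟩⁻²`; unlike `n⁻²` it obeys the convolution inequality with no exceptional frequency.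
An `abbrev`, so that `positivity` sees through it. -/
abbrev invBracketSq (n : ℤ) : ℝ := (1 + (n : ℝ) ^ 2)⁻¹

lemma invBracketSq_neg (n : ℤ) : invBracketSq (-n) = invBracketSq n := by
  simp [invBracketSq]

lemma invBracketSq_two_mul_le (n : ℤ) : invBracketSq (2 * n) ≤ invBracketSq n := by
  apply inv_anti₀ (by positivity)
  push_cast
  nlinarith [sq_nonneg (n : ℝ)]

lemma inv_abs_sq_le_two_mul_invBracketSq (n : ℤ) : (|(n : ℝ)|⁻¹) ^ 2 ≤ 2 * invBracketSq n := by
  rcases eq_or_ne n 0 with rfl | hn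
  · simp [invBracketSq]
  have hn2 : (1 : ℝ) ≤ (n : ℝ) ^ 2 := by
    have : (1 : ℤ) ≤ n ^ 2 := by nlinarith [Int.one_le_abs hn, sq_abs n]
    exact_mod_cast this
  rw [inv_pow, sq_abs, invBracketSq]
  field_simp
  rw [div_le_iff₀ (by positivity)]
  linarith

lemma invBracketSq_mul_le (x y : ℤ) :
    invBracketSq x * invBracketSq y ≤
      4 * invBracketSq (x + y) * (invBracketSq x + invBracketSq y) := by
  have key : ∀ a b : ℤ, |a| ≤ |b| → invBracketSq b ≤ 4 * invBracketSq (a + b) := by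
    intro a b hab
    have hab' : |(a : ℝ) + b| ≤ 2 * |(b : ℝ)| := by
      have : |a + b| ≤ 2 * |b| := (abs_add_le a b).trans (by linarith)
      exact_mod_cast this
    unfold invBracketSq
    push_cast
    field_simp
    nlinarith [sq_abs ((a : ℝ) + b), sq_abs (b : ℝ), abs_nonneg ((a : ℝ) + b)]
  have hx : 0 ≤ invBracketSq x := by positivity
  have hy : 0 ≤ invBracketSq y := by positivity
  have hxy : 0 ≤ invBracketSq (x + y) := by positivity
  rcases le_total |x| |y| with h | h
  · nlinarith [key x y h]
  · nlinarith [add_comm y x ▸ key y x h]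

lemma summable_invBracketSq : Summable invBracketSq := by
  refine .of_norm_bounded_eventually (Real.summable_one_div_int_pow.mpr one_lt_two) ?_
  filter_upwards [Filter.eventually_cofinite_ne 0] with n hn
  rw [Real.norm_of_nonneg (by positivity), invBracketSq, one_div]
  exact inv_anti₀ (by positivity) (by simp)

def ennInvBracketSq (n : ℤ) : ℝ≥0∞ := ENNReal.ofReal (invBracketSq n)

lemma tsum_ennInvBracketSq : ∑' n, ennInvBracketSq n = ENNReal.ofReal (∑' n, invBracketSq n) :=
  (ENNReal.ofReal_tsum_of_nonneg (fun _ => by positivity) summable_invBracketSq).symm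

lemma tsum_ennInvBracketSq_add (a : ℤ) :
    ∑' n, ennInvBracketSq (a + n) = ∑' n, ennInvBracketSq n :=
  (Equiv.addLeft a).tsum_eq ennInvBracketSq

lemma tsum_ennInvBracketSq_sub (a : ℤ) :
    ∑' n, ennInvBracketSq (a - n) = ∑' n, ennInvBracketSq n :=
  (Equiv.subLeft a).tsum_eq ennInvBracketSq

lemma ennInvBracketSq_mul_le (x y : ℤ) :
    ennInvBracketSq x * ennInvBracketSq y ≤
      4 * ennInvBracketSq (x + y) * (ennInvBracketSq x + ennInvBracketSq y) := by
  have h := ENNReal.ofReal_le_ofReal (invBracketSq_mul_le x y)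
  rwa [ENNReal.ofReal_mul (by positivity), ENNReal.ofReal_mul (by positivity),
    ENNReal.ofReal_mul (by norm_num), ENNReal.ofReal_add (by positivity) (by positivity),
    ENNReal.ofReal_ofNat] at h

lemma tsum_ennInvBracketSq_conv_le (a b : ℤ) :
    ∑' n, ennInvBracketSq (a + n) * ennInvBracketSq (b - n) ≤
      8 * (∑' n, ennInvBracketSq n) * ennInvBracketSq (a + b) := by
  calc ∑' n, ennInvBracketSq (a + n) * ennInvBracketSq (b - n)
      ≤ ∑' n, 4 * ennInvBracketSq (a + b) *
          (ennInvBracketSq (a + n) + ennInvBracketSq (b - n)) :=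
        ENNReal.tsum_le_tsum fun n => by
          simpa using ennInvBracketSq_mul_le (a + n) (b - n)
    _ = 8 * (∑' n, ennInvBracketSq n) * ennInvBracketSq (a + b) := by
        rw [ENNReal.tsum_mul_left, ENNReal.tsum_add, tsum_ennInvBracketSq_add,
          tsum_ennInvBracketSq_sub]
        ring

lemma ennInvBracketSq_neg (n : ℤ) : ennInvBracketSq (-n) = ennInvBracketSq n := by
  rw [ennInvBracketSq, invBracketSq_neg, ennInvBracketSq]

lemma ennInvBracketSq_two_mul_le (n : ℤ) : ennInvBracketSq (2 * n) ≤ ennInvBracketSq n :=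
  ENNReal.ofReal_le_ofReal (invBracketSq_two_mul_le n)

section TripleSums

variable (k : ℤ)

local notation "Z" => ∑' n, ennInvBracketSq n

lemma tsum_ennInvBracketSq_conv_le' (x : ℤ) :
    ∑' y, ennInvBracketSq (x + y) * ennInvBracketSq (k - y) ≤
      8 * Z * ennInvBracketSq (k + x) :=
  add_comm x k ▸ tsum_ennInvBracketSq_conv_le x k

lemma tsum_ennInvBracketSq_triple_le₁ :
    ∑' p : ℤ × ℤ, ennInvBracketSq (p.1 + p.2) * ennInvBracketSq (k - p.2) *
      ennInvBracketSq (k - p.1) ≤ 64 * Z ^ 2 * ennInvBracketSq k := by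
  rw [ENNReal.tsum_prod']
  calc ∑' x, ∑' y, ennInvBracketSq (x + y) * ennInvBracketSq (k - y) * ennInvBracketSq (k - x)
      = ∑' x, ennInvBracketSq (k - x) *
          ∑' y, ennInvBracketSq (x + y) * ennInvBracketSq (k - y) := by
        simp_rw [← ENNReal.tsum_mul_left, mul_comm (ennInvBracketSq (k - _))]
    _ ≤ ∑' x, 8 * Z * (ennInvBracketSq (k + x) * ennInvBracketSq (k - x)) := by
        refine ENNReal.tsum_le_tsum fun x => ?_
        calc _ ≤ ennInvBracketSq (k - x) * (8 * Z * ennInvBracketSq (k + x)) := by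
              gcongr; exact tsum_ennInvBracketSq_conv_le' k x
          _ = _ := by ring
    _ ≤ 8 * Z * (8 * Z * ennInvBracketSq (2 * k)) := by
        rw [ENNReal.tsum_mul_left, two_mul]
        gcongr
        exact tsum_ennInvBracketSq_conv_le k k
    _ ≤ 64 * Z ^ 2 * ennInvBracketSq k := by
        calc _ = 64 * Z ^ 2 * ennInvBracketSq (2 * k) := by ring
          _ ≤ _ := by gcongr; exact ennInvBracketSq_two_mul_le k

lemma tsum_ennInvBracketSq_triple_le₂ :
    ∑' p : ℤ × ℤ, ennInvBracketSq p.1 * ennInvBracketSq (p.1 + p.2) *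
      ennInvBracketSq (k - p.2) ≤ 64 * Z ^ 2 * ennInvBracketSq k := by
  rw [ENNReal.tsum_prod']
  calc ∑' x, ∑' y, ennInvBracketSq x * ennInvBracketSq (x + y) * ennInvBracketSq (k - y)
      = ∑' x, ennInvBracketSq x *
          ∑' y, ennInvBracketSq (x + y) * ennInvBracketSq (k - y) := by
        simp_rw [← ENNReal.tsum_mul_left, mul_assoc]
    _ ≤ ∑' x, 8 * Z * (ennInvBracketSq (k + x) * ennInvBracketSq (0 - x)) := by
        refine ENNReal.tsum_le_tsum fun x => ?_
        calc _ ≤ ennInvBracketSq x * (8 * Z * ennInvBracketSq (k + x)) := by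
              gcongr; exact tsum_ennInvBracketSq_conv_le' k x
          _ = _ := by rw [zero_sub, ennInvBracketSq_neg]; ring
    _ ≤ 8 * Z * (8 * Z * ennInvBracketSq (k + 0)) := by
        rw [ENNReal.tsum_mul_left]
        gcongr
        exact tsum_ennInvBracketSq_conv_le k 0
    _ = 64 * Z ^ 2 * ennInvBracketSq k := by rw [add_zero]; ring

lemma tsum_ennInvBracketSq_triple_le₃ :
    ∑' p : ℤ × ℤ, ennInvBracketSq p.1 * ennInvBracketSq (k - p.2) *
      ennInvBracketSq (k - p.1) ≤ 64 * Z ^ 2 * ennInvBracketSq k := by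
  rw [ENNReal.tsum_prod']
  calc ∑' x, ∑' y, ennInvBracketSq x * ennInvBracketSq (k - y) * ennInvBracketSq (k - x)
      = ∑' x, Z * (ennInvBracketSq (0 + x) * ennInvBracketSq (k - x)) := by
        refine tsum_congr fun x => ?_
        rw [← tsum_ennInvBracketSq_sub k, ← ENNReal.tsum_mul_right, zero_add]
        exact tsum_congr fun y => by ring
    _ ≤ Z * (8 * Z * ennInvBracketSq (0 + k)) := by
        rw [ENNReal.tsum_mul_left]
        gcongr
        exact tsum_ennInvBracketSq_conv_le 0 k
    _ ≤ 64 * Z ^ 2 * ennInvBracketSq k := by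
        rw [zero_add]
        calc _ = 8 * Z ^ 2 * ennInvBracketSq k := by ring
          _ ≤ _ := by gcongr; norm_num

end TripleSums

/-- The kernel of `B₄¹` plus the bound `(|γ| + |α| + |k₁|) / |k₁αβγ|` for that of `B₄²`, where
`α = k₁ + k₂`, `β = k₁ + k₃ + k₄`, `γ = k₂ + k₃ + k₄`. -/
def quarticMultiplier (k₁ α β γ : ℤ) : ℝ :=
  2 * (|(α : ℝ)|⁻¹ * |(β : ℝ)|⁻¹ * |(γ : ℝ)|⁻¹) + |(k₁ : ℝ)|⁻¹ * |(α : ℝ)|⁻¹ * |(β : ℝ)|⁻¹ +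
    |(k₁ : ℝ)|⁻¹ * |(β : ℝ)|⁻¹ * |(γ : ℝ)|⁻¹

lemma quarticMultiplier_nonneg (k₁ α β γ : ℤ) : 0 ≤ quarticMultiplier k₁ α β γ := by
  unfold quarticMultiplier; positivity

lemma inv_abs_mul_sq_le (a b c : ℤ) :
    (|(a : ℝ)|⁻¹ * |(b : ℝ)|⁻¹ * |(c : ℝ)|⁻¹) ^ 2 ≤
      8 * (invBracketSq a * invBracketSq b * invBracketSq c) := by
  rw [mul_pow, mul_pow]
  calc _ ≤ (2 * invBracketSq a) * (2 * invBracketSq b) * (2 * invBracketSq c) := by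
        gcongr <;> exact inv_abs_sq_le_two_mul_invBracketSq _
    _ = _ := by ring

lemma quarticMultiplier_sq_le (k₁ α β γ : ℤ) :
    quarticMultiplier k₁ α β γ ^ 2 ≤
      48 * (invBracketSq α * invBracketSq β * invBracketSq γ +
        invBracketSq k₁ * invBracketSq α * invBracketSq β +
        invBracketSq k₁ * invBracketSq β * invBracketSq γ) := by
  have h₁ := inv_abs_mul_sq_le α β γ
  have h₂ := inv_abs_mul_sq_le k₁ α β
  have h₃ := inv_abs_mul_sq_le k₁ β γ
  set x := |(α : ℝ)|⁻¹ * |(β : ℝ)|⁻¹ * |(γ : ℝ)|⁻¹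
  set y := |(k₁ : ℝ)|⁻¹ * |(α : ℝ)|⁻¹ * |(β : ℝ)|⁻¹
  set z := |(k₁ : ℝ)|⁻¹ * |(β : ℝ)|⁻¹ * |(γ : ℝ)|⁻¹
  have hcs : (2 * x + y + z) ^ 2 ≤ 6 * (x ^ 2 + y ^ 2 + z ^ 2) := by
    nlinarith [sq_nonneg (2 * y - x), sq_nonneg (2 * z - x), sq_nonneg (y - z)]
  unfold quarticMultiplier
  linarith

lemma ofReal_quarticMultiplier_sq_le (k₁ α β γ : ℤ) :
    ENNReal.ofReal (quarticMultiplier k₁ α β γ) ^ 2 ≤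
      48 * (ennInvBracketSq α * ennInvBracketSq β * ennInvBracketSq γ +
        ennInvBracketSq k₁ * ennInvBracketSq α * ennInvBracketSq β +
        ennInvBracketSq k₁ * ennInvBracketSq β * ennInvBracketSq γ) := by
  have h := ENNReal.ofReal_le_ofReal (quarticMultiplier_sq_le k₁ α β γ)
  rwa [ENNReal.ofReal_pow (quarticMultiplier_nonneg _ _ _ _), ENNReal.ofReal_mul (by norm_num),
    ENNReal.ofReal_add (by positivity) (by positivity),
    ENNReal.ofReal_add (by positivity) (by positivity), ENNReal.ofReal_mul (by positivity),
    ENNReal.ofReal_mul (by positivity), ENNReal.ofReal_mul (by positivity),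
    ENNReal.ofReal_mul (by positivity), ENNReal.ofReal_mul (by positivity),
    ENNReal.ofReal_mul (by positivity), ENNReal.ofReal_ofNat] at h

lemma tsum_ofReal_quarticMultiplier_sq_le (k : ℤ) :
    ∑' p : ℤ × ℤ, ENNReal.ofReal (quarticMultiplier p.1 (p.1 + p.2) (k - p.2) (k - p.1)) ^ 2 ≤
      9216 * (∑' n, ennInvBracketSq n) ^ 2 * ennInvBracketSq k := by
  calc _ ≤ ∑' p : ℤ × ℤ, 48 *
        (ennInvBracketSq (p.1 + p.2) * ennInvBracketSq (k - p.2) * ennInvBracketSq (k - p.1) +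
          ennInvBracketSq p.1 * ennInvBracketSq (p.1 + p.2) * ennInvBracketSq (k - p.2) +
          ennInvBracketSq p.1 * ennInvBracketSq (k - p.2) * ennInvBracketSq (k - p.1)) :=
        ENNReal.tsum_le_tsum fun p => ofReal_quarticMultiplier_sq_le _ _ _ _
    _ ≤ 48 * (64 * (∑' n, ennInvBracketSq n) ^ 2 * ennInvBracketSq k +
          64 * (∑' n, ennInvBracketSq n) ^ 2 * ennInvBracketSq k +
          64 * (∑' n, ennInvBracketSq n) ^ 2 * ennInvBracketSq k) := by
        rw [ENNReal.tsum_mul_left, ENNReal.tsum_add, ENNReal.tsum_add]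
        gcongr
        exacts [tsum_ennInvBracketSq_triple_le₁ k, tsum_ennInvBracketSq_triple_le₂ k,
          tsum_ennInvBracketSq_triple_le₃ k]
    _ = 9216 * (∑' n, ennInvBracketSq n) ^ 2 * ennInvBracketSq k := by ring

def b41Summand (t : ℝ) (φ ψ ξ η : ℤ → ℂ) (k1 k2 k3 k4 : ℤ) : ℂ :=
  if k1 ≠ 0 ∧ k2 ≠ 0 ∧ k3 ≠ 0 ∧ k4 ≠ 0 ∧
      (k1 + k2) * (k1 + k3 + k4) * (k2 + k3 + k4) ≠ 0 then
    osc4 t k1 k2 k3 k4 * φ k1 * ψ k2 * ξ k3 * η k4 /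
      (((k1 + k2 : ℤ) : ℂ) * ((k1 + k3 + k4 : ℤ) : ℂ) * ((k2 + k3 + k4 : ℤ) : ℂ))
  else 0

def b42Summand (t : ℝ) (φ ψ ξ η : ℤ → ℂ) (k1 k2 k3 k4 : ℤ) : ℂ :=
  if k1 ≠ 0 ∧ k2 ≠ 0 ∧ k3 ≠ 0 ∧ k4 ≠ 0 ∧
      (k1 + k2) * (k1 + k3 + k4) * (k2 + k3 + k4) ≠ 0 then
    osc4 t k1 k2 k3 k4 * ((k3 + k4 : ℤ) : ℂ) * φ k1 * ψ k2 * ξ k3 * η k4 /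
      ((k1 : ℂ) * ((k1 + k2 : ℤ) : ℂ) * ((k1 + k3 + k4 : ℤ) : ℂ) * ((k2 + k3 + k4 : ℤ) : ℂ))
  else 0

lemma B41_eq_tsum (t : ℝ) (φ ψ ξ η : ℤ → ℂ) (k : ℤ) :
    B41 t φ ψ ξ η k = ∑' q : ℤ × ℤ × ℤ,
      b41Summand t φ ψ ξ η q.1 q.2.1 q.2.2 (k - q.1 - q.2.1 - q.2.2) := rfl

lemma B42_eq_tsum (t : ℝ) (φ ψ ξ η : ℤ → ℂ) (k : ℤ) :
    B42 t φ ψ ξ η k = ∑' q : ℤ × ℤ × ℤ,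
      b42Summand t φ ψ ξ η q.1 q.2.1 q.2.2 (k - q.1 - q.2.1 - q.2.2) := rfl

lemma norm_osc4 (t : ℝ) (k1 k2 k3 k4 : ℤ) : ‖osc4 t k1 k2 k3 k4‖ = 1 := by
  rw [osc4, mul_comm Complex.I, mul_right_comm, ← Complex.ofReal_intCast,
    ← Complex.ofReal_mul, Complex.norm_exp_ofReal_mul_I]

lemma abs_sub_add_mul_inv_le {a b c d : ℝ} (ha : a ≠ 0) (hb : b ≠ 0) (hc : c ≠ 0) :
    |c - b + a| * (|a|⁻¹ * |b|⁻¹ * |d|⁻¹ * |c|⁻¹) ≤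
      |b|⁻¹ * |d|⁻¹ * |c|⁻¹ + |a|⁻¹ * |b|⁻¹ * |d|⁻¹ + |a|⁻¹ * |d|⁻¹ * |c|⁻¹ := by
  calc _ ≤ (|c| + |b| + |a|) * (|a|⁻¹ * |b|⁻¹ * |d|⁻¹ * |c|⁻¹) := by
        gcongr
        linarith [abs_add_le (c - b) a, abs_sub c b]
    _ = _ := by field_simp; ring

lemma norm_b41Summand_add_norm_b42Summand_le (t : ℝ) (φ ψ ξ η : ℤ → ℂ) (k1 k2 k3 k4 : ℤ) :
    ‖b41Summand t φ ψ ξ η k1 k2 k3 k4‖ + ‖b42Summand t φ ψ ξ η k1 k2 k3 k4‖ ≤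
      ‖φ k1‖ * ‖ψ k2‖ * ‖ξ k3‖ * ‖η k4‖ *
        quarticMultiplier k1 (k1 + k2) (k1 + k3 + k4) (k2 + k3 + k4) := by
  unfold b41Summand b42Summand
  split_ifs with h
  swap
  · simp only [norm_zero, add_zero]
    have := quarticMultiplier_nonneg k1 (k1 + k2) (k1 + k3 + k4) (k2 + k3 + k4)
    positivity
  obtain ⟨h1, -, -, -, h5⟩ := h
  simp only [mul_ne_zero_iff] at h5
  obtain ⟨⟨hα, hβ⟩, hγ⟩ := h5
  have key := abs_sub_add_mul_inv_le (a := (k1 : ℝ)) (b := ((k1 + k2 : ℤ) : ℝ))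
    (c := ((k2 + k3 + k4 : ℤ) : ℝ)) (d := ((k1 + k3 + k4 : ℤ) : ℝ))
    (by exact_mod_cast h1) (by exact_mod_cast hα) (by exact_mod_cast hγ)
  have hk34 : ((k2 + k3 + k4 : ℤ) : ℝ) - ((k1 + k2 : ℤ) : ℝ) + k1 = ((k3 + k4 : ℤ) : ℝ) := by
    push_cast; ring
  rw [hk34] at key
  simp only [div_eq_mul_inv, norm_mul, norm_inv, norm_osc4, Complex.norm_intCast, one_mul,
    mul_inv]
  unfold quarticMultiplier
  have hP : 0 ≤ ‖φ k1‖ * ‖ψ k2‖ * ‖ξ k3‖ * ‖η k4‖ := by positivity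
  nlinarith [mul_le_mul_of_nonneg_left key hP]

lemma wt_nonneg (s : ℝ) (k : ℤ) : 0 ≤ wt s k := by
  unfold wt; positivity

-- The zero mode is removed by hand since `|0| ^ 0 = 1`.
def weightedCoeff (s : ℝ) (u : ℤ → ℂ) (n : ℤ) : ℝ≥0∞ :=
  if n = 0 then 0 else ENNReal.ofReal (|(n : ℝ)| ^ s * ‖u n‖)

lemma tsum_weightedCoeff_sq {s : ℝ} {u : ℤ → ℂ} (hu : memH s u) :
    ∑' n, weightedCoeff s u n ^ 2 = ENNReal.ofReal (hnorm s u ^ 2) := by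
  have h : ∀ n, weightedCoeff s u n ^ 2 =
      Set.indicator {n : ℤ | n ≠ 0} (fun n => ENNReal.ofReal (wt s n * ‖u n‖ ^ 2)) n := by
    intro n
    rcases eq_or_ne n 0 with rfl | hn
    · simp [weightedCoeff]
    rw [weightedCoeff, if_neg hn, Set.indicator_of_mem hn, ← ENNReal.ofReal_pow (by positivity),
      mul_pow, ← Real.rpow_natCast, ← Real.rpow_mul (abs_nonneg _), wt, Int.cast_abs]
    norm_num [mul_comm]
  have hwt : ∀ k : {k : ℤ // k ≠ 0}, 0 ≤ wt s k.1 * ‖u k.1‖ ^ 2 :=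
    fun _ => mul_nonneg (wt_nonneg _ _) (sq_nonneg _)
  rw [tsum_congr h, ← tsum_subtype, hnorm, Real.sq_sqrt (tsum_nonneg hwt),
    ENNReal.ofReal_tsum_of_nonneg hwt hu]
  rfl

lemma abs_add_abs_le_two_mul_abs_mul {a b : ℤ} (ha : a ≠ 0) (hb : b ≠ 0) :
    |a| + |b| ≤ 2 * |a * b| := by
  rw [abs_mul]
  nlinarith [Int.one_le_abs ha, Int.one_le_abs hb]

lemma abs_add_add_add_le_four_mul {k1 k2 k3 k4 : ℤ} (h1 : k1 ≠ 0) (h2 : k2 ≠ 0) (h3 : k3 ≠ 0)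
    (h4 : k4 ≠ 0) : |k1 + k2 + k3 + k4| ≤ 4 * |k1 * k2 * k3 * k4| := by
  have h12 := abs_add_abs_le_two_mul_abs_mul h1 h2
  have h34 := abs_add_abs_le_two_mul_abs_mul h3 h4
  have h1234 := abs_add_abs_le_two_mul_abs_mul (mul_ne_zero h1 h2) (mul_ne_zero h3 h4)
  have := abs_add_le k1 k2
  have := abs_add_le k3 k4
  rw [show k1 * k2 * k3 * k4 = k1 * k2 * (k3 * k4) by ring, add_assoc (k1 + k2)]
  linarith [abs_add_le (k1 + k2) (k3 + k4)]

lemma abs_add_add_add_rpow_le {s : ℝ} (hs : 0 ≤ s) {k1 k2 k3 k4 : ℤ} (h1 : k1 ≠ 0)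
    (h2 : k2 ≠ 0) (h3 : k3 ≠ 0) (h4 : k4 ≠ 0) :
    |((k1 + k2 + k3 + k4 : ℤ) : ℝ)| ^ s ≤
      4 ^ s * (|(k1 : ℝ)| ^ s * |(k2 : ℝ)| ^ s * |(k3 : ℝ)| ^ s * |(k4 : ℝ)| ^ s) := by
  have h : |((k1 + k2 + k3 + k4 : ℤ) : ℝ)| ≤ 4 * |((k1 * k2 * k3 * k4 : ℤ) : ℝ)| := by
    exact_mod_cast abs_add_add_add_le_four_mul h1 h2 h3 h4
  calc _ ≤ (4 * |((k1 * k2 * k3 * k4 : ℤ) : ℝ)|) ^ s := by gcongr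
    _ = _ := by
      push_cast
      simp only [abs_mul]
      rw [Real.mul_rpow (by norm_num) (by positivity),
        Real.mul_rpow (by positivity) (by positivity),
        Real.mul_rpow (by positivity) (by positivity),
        Real.mul_rpow (by positivity) (by positivity)]

lemma ofReal_mul_enorm_summands_le {s : ℝ} (hs : 0 ≤ s) (t : ℝ) (φ ψ ξ η : ℤ → ℂ)
    (k k1 k2 k3 : ℤ) :
    ENNReal.ofReal (|(k : ℝ)| ^ s) * (‖b41Summand t φ ψ ξ η k1 k2 k3 (k - k1 - k2 - k3)‖ₑ +
        ‖b42Summand t φ ψ ξ η k1 k2 k3 (k - k1 - k2 - k3)‖ₑ) ≤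
      ENNReal.ofReal (4 ^ s) * (weightedCoeff s φ k1 * weightedCoeff s ψ k2 *
        ENNReal.ofReal (quarticMultiplier k1 (k1 + k2) (k - k2) (k - k1)) *
        weightedCoeff s ξ k3 * weightedCoeff s η (k - k1 - k2 - k3)) := by
  set k4 := k - k1 - k2 - k3
  have hk : k = k1 + k2 + k3 + k4 := by omega
  by_cases h : k1 ≠ 0 ∧ k2 ≠ 0 ∧ k3 ≠ 0 ∧ k4 ≠ 0
  swap
  · have hF : ∀ z : ℂ, (if k1 ≠ 0 ∧ k2 ≠ 0 ∧ k3 ≠ 0 ∧ k4 ≠ 0 ∧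
        (k1 + k2) * (k1 + k3 + k4) * (k2 + k3 + k4) ≠ 0 then z else 0) = 0 :=
      fun z => if_neg fun h' => h ⟨h'.1, h'.2.1, h'.2.2.1, h'.2.2.2.1⟩
    simp only [b41Summand, b42Summand, hF, enorm_zero, add_zero, mul_zero, zero_le]
  obtain ⟨h1, h2, h3, h4⟩ := h
  have hβ : k - k2 = k1 + k3 + k4 := by omega
  have hγ : k - k1 = k2 + k3 + k4 := by omega
  have hM := quarticMultiplier_nonneg k1 (k1 + k2) (k1 + k3 + k4) (k2 + k3 + k4)
  simp only [weightedCoeff, if_neg h1, if_neg h2, if_neg h3, if_neg h4, hβ, hγ]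
  rw [← ofReal_norm, ← ofReal_norm, ← ENNReal.ofReal_add (norm_nonneg _) (norm_nonneg _),
    ← ENNReal.ofReal_mul (by positivity), ← ENNReal.ofReal_mul (by positivity),
    ← ENNReal.ofReal_mul (by positivity), ← ENNReal.ofReal_mul (by positivity),
    ← ENNReal.ofReal_mul (by positivity), ← ENNReal.ofReal_mul (by positivity)]
  refine ENNReal.ofReal_le_ofReal ?_
  calc _ ≤ 4 ^ s * (|(k1 : ℝ)| ^ s * |(k2 : ℝ)| ^ s * |(k3 : ℝ)| ^ s * |(k4 : ℝ)| ^ s) *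
        (‖φ k1‖ * ‖ψ k2‖ * ‖ξ k3‖ * ‖η k4‖ *
          quarticMultiplier k1 (k1 + k2) (k1 + k3 + k4) (k2 + k3 + k4)) := by
        rw [hk]
        gcongr
        · exact abs_add_add_add_rpow_le hs h1 h2 h3 h4
        · exact norm_b41Summand_add_norm_b42Summand_le t φ ψ ξ η k1 k2 k3 k4
    _ = _ := by ring

lemma ofReal_mul_enorm_B4_le {s : ℝ} (hs : 0 ≤ s) (t : ℝ) (φ ψ ξ η : ℤ → ℂ) (k : ℤ) :
    ENNReal.ofReal (|(k : ℝ)| ^ s) * ‖B4 t φ ψ ξ η k‖ₑ ≤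
      ENNReal.ofReal (4 ^ s) * (l2norm (weightedCoeff s φ) * l2norm (weightedCoeff s ψ) *
        l2norm (fun p : ℤ × ℤ =>
          ENNReal.ofReal (quarticMultiplier p.1 (p.1 + p.2) (k - p.2) (k - p.1))) *
        l2norm (weightedCoeff s ξ) * l2norm (weightedCoeff s η)) := by
  have hB4 : ‖B4 t φ ψ ξ η k‖ₑ ≤ ∑' q : ℤ × ℤ × ℤ,
      (‖b41Summand t φ ψ ξ η q.1 q.2.1 q.2.2 (k - q.1 - q.2.1 - q.2.2)‖ₑ +
        ‖b42Summand t φ ψ ξ η q.1 q.2.1 q.2.2 (k - q.1 - q.2.1 - q.2.2)‖ₑ) := by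
    calc ‖B4 t φ ψ ξ η k‖ₑ = ‖B41 t φ ψ ξ η k + B42 t φ ψ ξ η k‖ₑ := rfl
      _ ≤ ‖B41 t φ ψ ξ η k‖ₑ + ‖B42 t φ ψ ξ η k‖ₑ := enorm_add_le _ _
      _ ≤ _ := by
        rw [ENNReal.tsum_add, B41_eq_tsum, B42_eq_tsum]
        gcongr <;> exact enorm_tsum_le_tsum_enorm
  calc _ ≤ ∑' q : ℤ × ℤ × ℤ, ENNReal.ofReal (|(k : ℝ)| ^ s) *
        (‖b41Summand t φ ψ ξ η q.1 q.2.1 q.2.2 (k - q.1 - q.2.1 - q.2.2)‖ₑ +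
          ‖b42Summand t φ ψ ξ η q.1 q.2.1 q.2.2 (k - q.1 - q.2.1 - q.2.2)‖ₑ) := by
        rw [ENNReal.tsum_mul_left]
        gcongr
    _ ≤ ∑' q : ℤ × ℤ × ℤ, ENNReal.ofReal (4 ^ s) * (weightedCoeff s φ q.1 *
          weightedCoeff s ψ q.2.1 * ENNReal.ofReal
            (quarticMultiplier q.1 (q.1 + q.2.1) (k - q.2.1) (k - q.1)) *
          weightedCoeff s ξ q.2.2 * weightedCoeff s η (k - q.1 - q.2.1 - q.2.2)) :=
        ENNReal.tsum_le_tsum fun q => ofReal_mul_enorm_summands_le hs t φ ψ ξ η k _ _ _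
    _ ≤ _ := by
        rw [ENNReal.tsum_mul_left]
        gcongr
        exact tsum_quadrilinear_le _ _ _ _ _ k

lemma wt_mul_norm_B4_sq_le {s : ℝ} (hs : 0 ≤ s) (t : ℝ) {φ ψ ξ η : ℤ → ℂ}
    (hφ : memH s φ) (hψ : memH s ψ) (hξ : memH s ξ) (hη : memH s η) (k : ℤ) :
    wt s k * ‖B4 t φ ψ ξ η k‖ ^ 2 ≤
      (4 ^ s * 96 * (∑' n, invBracketSq n) *
        (hnorm s φ * hnorm s ψ * hnorm s ξ * hnorm s η)) ^ 2 * invBracketSq k := by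
  have h := pow_le_pow_left₀ (by positivity) (ofReal_mul_enorm_B4_le hs t φ ψ ξ η k) 2
  simp only [mul_pow, l2norm_sq, tsum_weightedCoeff_sq hφ, tsum_weightedCoeff_sq hψ,
    tsum_weightedCoeff_sq hξ, tsum_weightedCoeff_sq hη] at h
  have hμ := tsum_ofReal_quarticMultiplier_sq_le k
  rw [tsum_ennInvBracketSq, ennInvBracketSq] at hμ
  rw [← ENNReal.ofReal_le_ofReal_iff (by positivity)]
  calc ENNReal.ofReal (wt s k * ‖B4 t φ ψ ξ η k‖ ^ 2)
      = ENNReal.ofReal (|(k : ℝ)| ^ s) ^ 2 * ‖B4 t φ ψ ξ η k‖ₑ ^ 2 := by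
        have hw : wt s k * ‖B4 t φ ψ ξ η k‖ ^ 2 = (|(k : ℝ)| ^ s * ‖B4 t φ ψ ξ η k‖) ^ 2 := by
          rw [wt, Int.cast_abs, mul_pow, ← Real.rpow_mul_natCast (abs_nonneg _)]
          norm_num [mul_comm]
        rw [hw, ENNReal.ofReal_pow (by positivity), ENNReal.ofReal_mul (by positivity),
          ofReal_norm, mul_pow]
    _ ≤ ENNReal.ofReal (4 ^ s) ^ 2 * (ENNReal.ofReal (hnorm s φ ^ 2) *
          ENNReal.ofReal (hnorm s ψ ^ 2) *
          (9216 * ENNReal.ofReal (∑' n, invBracketSq n) ^ 2 * ENNReal.ofReal (invBracketSq k)) *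
          ENNReal.ofReal (hnorm s ξ ^ 2) * ENNReal.ofReal (hnorm s η ^ 2)) :=
        h.trans (by gcongr)
    _ = _ := by
        rw [show (4 ^ s * 96 * (∑' n, invBracketSq n) *
            (hnorm s φ * hnorm s ψ * hnorm s ξ * hnorm s η)) ^ 2 * invBracketSq k =
            (4 ^ s) ^ 2 * (hnorm s φ ^ 2 * hnorm s ψ ^ 2 *
              (9216 * (∑' n, invBracketSq n) ^ 2 * invBracketSq k) *
              hnorm s ξ ^ 2 * hnorm s η ^ 2) by ring]
        rw [ENNReal.ofReal_mul (by positivity), ENNReal.ofReal_mul (by positivity),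
          ENNReal.ofReal_mul (by positivity), ENNReal.ofReal_mul (by positivity),
          ENNReal.ofReal_mul (by positivity), ENNReal.ofReal_mul (by positivity),
          ENNReal.ofReal_mul (by positivity), ENNReal.ofReal_pow (by positivity : (0 : ℝ) ≤ 4 ^ s),
          ENNReal.ofReal_pow (by positivity : (0 : ℝ) ≤ ∑' n, invBracketSq n),
          ENNReal.ofReal_ofNat]

lemma memH_add_and_hnorm_add_le {s ε M : ℝ} (hε : ε < 1 / 2) (hM : 0 ≤ M) {u : ℤ → ℂ}
    (h : ∀ k, wt s k * ‖u k‖ ^ 2 ≤ M ^ 2 * invBracketSq k) :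
    memH (s + ε) u ∧ hnorm (s + ε) u ≤ M * √(∑' k : ℤ, |(k : ℝ)| ^ (-(2 - 2 * ε))) := by
  set g : ℤ → ℝ := fun k => |(k : ℝ)| ^ (-(2 - 2 * ε))
  have hg : Summable g := Real.summable_abs_int_rpow (by linarith)
  have hpt : ∀ k : {k : ℤ // k ≠ 0}, wt (s + ε) k.1 * ‖u k.1‖ ^ 2 ≤ M ^ 2 * g k.1 := by
    rintro ⟨k, hk⟩
    have hk' : 0 < |(k : ℝ)| := abs_pos.mpr (Int.cast_ne_zero.mpr hk)
    have hρ : invBracketSq k ≤ |(k : ℝ)| ^ (-2 : ℝ) := by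
      rw [Real.rpow_neg hk'.le, Real.rpow_two, sq_abs]
      exact inv_anti₀ (by positivity) (by linarith)
    calc wt (s + ε) k * ‖u k‖ ^ 2 = |(k : ℝ)| ^ (2 * ε) * (wt s k * ‖u k‖ ^ 2) := by
          rw [wt, wt, Int.cast_abs, mul_add, Real.rpow_add hk']
          ring
      _ ≤ |(k : ℝ)| ^ (2 * ε) * (M ^ 2 * |(k : ℝ)| ^ (-2 : ℝ)) := by
          gcongr ?_ * ?_
          exact (h k).trans (by gcongr)
      _ = M ^ 2 * g k := by
          rw [mul_left_comm, ← Real.rpow_add hk']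
          congr 2
          ring
  have hsum : Summable fun k : {k : ℤ // k ≠ 0} => M ^ 2 * g k.1 := (hg.subtype _).mul_left _
  have hmem : memH (s + ε) u :=
    Summable.of_nonneg_of_le (fun _ => mul_nonneg (wt_nonneg _ _) (sq_nonneg _)) hpt hsum
  refine ⟨hmem, ?_⟩
  calc hnorm (s + ε) u ≤ √(M ^ 2 * ∑' k, g k) := by
        refine Real.sqrt_le_sqrt ((hmem.tsum_le_tsum hpt hsum).trans ?_)
        rw [tsum_mul_left]
        gcongr
        exact hg.tsum_subtype_le g _ (fun _ => by positivity)
    _ = M * √(∑' k, g k) := by rw [Real.sqrt_mul (sq_nonneg M), Real.sqrt_sq hM]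

theorem b4_smoothing_general (s ε : ℝ) (hs : 0 ≤ s) (hε : ε < 1 / 2) :
    ∃ C : ℝ, ∀ t : ℝ, ∀ φ ψ ξ η : ℤ → ℂ,
      memH s φ → memH s ψ → memH s ξ → memH s η →
      memH (s + ε) (B4 t φ ψ ξ η) ∧
      hnorm (s + ε) (B4 t φ ψ ξ η) ≤
        C * hnorm s φ * hnorm s ψ * hnorm s ξ * hnorm s η := by
  refine ⟨4 ^ s * 96 * (∑' n, invBracketSq n) * √(∑' k : ℤ, |(k : ℝ)| ^ (-(2 - 2 * ε))), ?_⟩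
  intro t φ ψ ξ η hφ hψ hξ hη
  have hnorm_nonneg : ∀ u, 0 ≤ hnorm s u := fun _ => Real.sqrt_nonneg _
  obtain ⟨hmem, hle⟩ := memH_add_and_hnorm_add_le hε
    (mul_nonneg (by positivity) (mul_nonneg (mul_nonneg (mul_nonneg (hnorm_nonneg φ)
      (hnorm_nonneg ψ)) (hnorm_nonneg ξ)) (hnorm_nonneg η)))
    (wt_mul_norm_B4_sq_le hs t hφ hψ hξ hη)
  exact ⟨hmem, hle.trans_eq (by ring)⟩

/-- Smoothing property of the quadrilinear operator
`B₄ = B₄¹ + B₄²`. -/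
theorem b4_smoothing (s ε : ℝ) (hs : 0 ≤ s) (hε0 : 0 < ε) (hε : ε < 1 / 2) :
    ∃ C : ℝ, ∀ t : ℝ, ∀ φ ψ ξ η : ℤ → ℂ,
      memH s φ → memH s ψ → memH s ξ → memH s η →
      memH (s + ε) (B4 t φ ψ ξ η) ∧
      hnorm (s + ε) (B4 t φ ψ ξ η) ≤
        C * hnorm s φ * hnorm s ψ * hnorm s ξ * hnorm s η :=
  b4_smoothing_general s ε hs hε
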